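/- Let X be an order-normal topological space with RO(X) ⊆ 𝒪ℛ𝒪(X) (every regular open set is order-regular open). Then the relation ≪ on RO(X), defined by U ≪ W iff closure(U) ⊆ ↓W, satisfies (A5): U ≪ W implies W^⊥ ≪ U^⊥, where U^⊥ is the complement of the closure of U. -/

import Mathlib

/-- The specialization preorder: `x ≤ y` iff every open set containing `x` contains `y`. -/
def specLE {X : Type*} [TopologicalSpace X] (x y : X) : Prop :=
  ∀ U : Set X, IsOpen U → x ∈ U → y ∈ U

/-- Downward closure of a set in the specialization preorder. -/
def dcl {X : Type*} [TopologicalSpace X] (A : Set X) : Set X :=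
  {x : X | ∃ y ∈ A, specLE x y}

/-- Interior in the upset topology of the specialization preorder. -/
def upInt {X : Type*} [TopologicalSpace X] (A : Set X) : Set X :=
  {x : X | ∀ y : X, specLE x y → y ∈ A}

/-- Regular open: `U` equals the interior of its closure. -/
def RegOpen {X : Type*} [TopologicalSpace X] (U : Set X) : Prop :=
  interior (closure U) = U

/-- Regular closed: `A` equals the closure of its interior. -/
def RegClosed {X : Type*} [TopologicalSpace X] (A : Set X) : Prop :=
  closure (interior A) = A

/-- Order-regular open: the upset-interior of the downward closure of `U` equals `U`. -/
def OrdRegOpen {X : Type*} [TopologicalSpace X] (U : Set X) : Prop :=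
  upInt (dcl U) = U

/-- Order-normal space: any closed `A` and regular closed `B` with `A` disjoint from the
upset-interior of `B` are separated by disjoint opens `U`, `W` with `A ⊆ ↓U` and
`upInt B ⊆ W`. -/
def OrderNormal (X : Type*) [TopologicalSpace X] : Prop :=
  ∀ A B : Set X, IsClosed A → RegClosed B → Disjoint A (upInt B) →
    ∃ U W : Set X, IsOpen U ∧ IsOpen W ∧ Disjoint U W ∧ A ⊆ dcl U ∧ upInt B ⊆ W

/-- Order-regular space. -/
def OrderRegular (X : Type*) [TopologicalSpace X] : Prop :=
  ∀ (A : Set X) (x : X), IsClosed A → x ∉ upInt A →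
    ∃ U W : Set X, IsOpen U ∧ IsOpen W ∧ Disjoint U W ∧ x ∈ U ∧ upInt A ⊆ W

/-- The subordination relation `U ≪ W`: the closure of `U` is contained in the
downward closure of `W`. -/
def ll {X : Type*} [TopologicalSpace X] (U W : Set X) : Prop :=
  closure U ⊆ dcl W

theorem upInt_mono {X : Type*} [TopologicalSpace X] {A B : Set X} (h : A ⊆ B) :
    upInt A ⊆ upInt B :=
  fun _ hx y hxy => h (hx y hxy)

theorem dcl_compl {X : Type*} [TopologicalSpace X] (A : Set X) : dcl Aᶜ = (upInt A)ᶜ := by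
  ext x
  simp [dcl, upInt, and_comm]

theorem RegOpen.closure_compl_closure {X : Type*} [TopologicalSpace X] {U : Set X}
    (hU : RegOpen U) : closure (closure U)ᶜ = Uᶜ := by
  rw [closure_compl, hU]

theorem ll.compl_closure {X : Type*} [TopologicalSpace X] {U W : Set X} (hW : RegOpen W)
    (hW' : OrdRegOpen W) (h : ll U W) : ll (closure W)ᶜ (closure U)ᶜ := by
  intro x hx
  rw [hW.closure_compl_closure] at hx
  rw [dcl_compl]
  intro hxU
  exact hx (hW' ▸ upInt_mono h hxU)

theorem stmt12_general (X : Type*) [TopologicalSpace X]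
    (hRO : ∀ U : Set X, RegOpen U → OrdRegOpen U)
    (U W : Set X) (hW : RegOpen W) (hll : ll U W) :
    ll (closure W)ᶜ (closure U)ᶜ :=
  hll.compl_closure hW (hRO W hW)

theorem stmt12 (X : Type*) [TopologicalSpace X] (hN : OrderNormal X)
    (hRO : ∀ U : Set X, RegOpen U → OrdRegOpen U)
    (U W : Set X) (hU : RegOpen U) (hW : RegOpen W) (hll : ll U W) :
    ll (closure W)ᶜ (closure U)ᶜ :=
  stmt12_general X hRO U W hW hll
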